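/- arXiv:2311.08855 — 2 statements merged into one kernel-verified Lean document; each statement's English description precedes it below -/
import Mathlib

section
/- Let α be a rational number with 0 < α < 1 and let p be the numerator of α (in lowest terms). Then α^p ≤ 1/2. -/
/-!
Writing `α = p / q` in lowest terms, `p < q` gives `α ≤ p / (p + 1)`, and Bernoulli's inequality
`(1 + 1/p)^p ≥ 1 + p · (1/p) = 2` gives `(p / (p + 1))^p ≤ 1/2`.
-/

section OrderedField

variable {K : Type*} [Field K] [LinearOrder K] [IsStrictOrderedRing K]

theorem two_le_one_add_inv_pow {n : ℕ} (hn : n ≠ 0) : 2 ≤ (1 + (n : K)⁻¹) ^ n := by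
  have h_inv_nonneg : (0 : K) ≤ (n : K)⁻¹ := by positivity
  have bernoulli := one_add_mul_le_pow (by linarith : (-2 : K) ≤ (n : K)⁻¹) n
  rwa [mul_inv_cancel₀ (by exact_mod_cast hn), one_add_one_eq_two] at bernoulli

theorem div_add_one_pow_self_le_half {n : ℕ} (hn : n ≠ 0) : ((n : K) / (n + 1)) ^ n ≤ 1 / 2 := by
  have hn' : (n : K) ≠ 0 := by exact_mod_cast hn
  have h_inv : (n : K) / (n + 1) = (1 + (n : K)⁻¹)⁻¹ := by field_simp
  rw [h_inv, inv_pow, one_div]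
  exact inv_anti₀ two_pos (two_le_one_add_inv_pow hn)

end OrderedField

theorem Rat.le_num_div_num_add_one {q : ℚ} (h0 : 0 ≤ q) (h1 : q < 1) :
    q ≤ q.num / (q.num + 1) := by
  have h_succ_le_den : (q.num : ℚ) + 1 ≤ q.den := by exact_mod_cast Rat.num_lt_denom_iff.mpr h1
  have h_num : (0 : ℚ) ≤ q.num := by exact_mod_cast Rat.num_nonneg.mpr h0
  calc q = q.num / q.den := (Rat.num_div_den q).symm
    _ ≤ q.num / (q.num + 1) := div_le_div_of_nonneg_left h_num (by positivity) h_succ_le_den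

theorem pow_num_le_half (α : ℚ) (h0 : 0 < α) (h1 : α < 1) :
    α ^ α.num ≤ 1 / 2 := by
  obtain ⟨p, hp⟩ := Int.eq_ofNat_of_zero_le (Rat.num_nonneg.mpr h0.le)
  have hp0 : p ≠ 0 := by
    rintro rfl
    exact (Rat.num_pos.mpr h0).ne' hp
  have hα : α ≤ p / (p + 1) := by
    simpa only [hp, Int.cast_natCast] using Rat.le_num_div_num_add_one h0.le h1
  calc α ^ α.num = α ^ p := by rw [hp, zpow_natCast]
    _ ≤ ((p : ℚ) / (p + 1)) ^ p := pow_le_pow_left₀ h0.le hα p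
    _ ≤ 1 / 2 := div_add_one_pow_self_le_half hp0
end

section
/- Let α, c, r be rational numbers with 0 < α < 1, and let S, x : ℕ → ℚ be sequences such that x_{k+1} = (1−α)·x_k + α·S_{k+1} for all k, and c − r ≤ S_k ≤ c + r for all k with 1 ≤ k ≤ n. Then (1−α)^n · x_0 + (1 − (1−α)^n)·(c − r) ≤ x_n ≤ (1−α)^n · x_0 + (1 − (1−α)^n)·(c + r). -/
/-!
Subtracting the bound `b` from the recurrence gives
`x (k+1) - b = (1 - α) (x k - b) + α (S (k+1) - b) ≤ (1 - α) (x k - b)` whenever `S (k+1) ≤ b`,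
so `x n - b ≤ (1 - α)^n (x 0 - b)`, which is the upper bound. The lower bound is the upper bound
for the negated sequences, which satisfy the same recurrence.
-/

section ExponentialMovingAverage

variable {K : Type*} [CommRing K] [PartialOrder K] [IsOrderedRing K]
  {α b : K} {S x : ℕ → K} {n : ℕ}

theorem ema_sub_le_pow_mul (h0 : 0 ≤ α) (h1 : α ≤ 1)
    (hrec : ∀ k, x (k + 1) = (1 - α) * x k + α * S (k + 1))
    (hS : ∀ k, 1 ≤ k → k ≤ n → S k ≤ b) :
    x n - b ≤ (1 - α) ^ n * (x 0 - b) := by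
  induction n with
  | zero => simp
  | succ n ih =>
    have hstep : x (n + 1) - b ≤ (1 - α) * (x n - b) := by
      have hsample : α * (S (n + 1) - b) ≤ 0 :=
        mul_nonpos_of_nonneg_of_nonpos h0 (sub_nonpos.mpr (hS (n + 1) (Nat.le_add_left 1 n) le_rfl))
      calc x (n + 1) - b = (1 - α) * (x n - b) + α * (S (n + 1) - b) := by rw [hrec]; ring
        _ ≤ (1 - α) * (x n - b) := add_le_of_le_of_nonpos le_rfl hsample
    calc x (n + 1) - b ≤ (1 - α) * (x n - b) := hstep
      _ ≤ (1 - α) * ((1 - α) ^ n * (x 0 - b)) :=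
        mul_le_mul_of_nonneg_left (ih fun k hk hkn => hS k hk (hkn.trans n.le_succ)) (sub_nonneg.mpr h1)
      _ = (1 - α) ^ (n + 1) * (x 0 - b) := by ring

theorem ema_le (h0 : 0 ≤ α) (h1 : α ≤ 1)
    (hrec : ∀ k, x (k + 1) = (1 - α) * x k + α * S (k + 1))
    (hS : ∀ k, 1 ≤ k → k ≤ n → S k ≤ b) :
    x n ≤ (1 - α) ^ n * x 0 + (1 - (1 - α) ^ n) * b := by
  have h := ema_sub_le_pow_mul h0 h1 hrec hS
  calc x n = (x n - b) + b := by ring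
    _ ≤ (1 - α) ^ n * (x 0 - b) + b := by gcongr
    _ = (1 - α) ^ n * x 0 + (1 - (1 - α) ^ n) * b := by ring

theorem le_ema (h0 : 0 ≤ α) (h1 : α ≤ 1)
    (hrec : ∀ k, x (k + 1) = (1 - α) * x k + α * S (k + 1))
    (hS : ∀ k, 1 ≤ k → k ≤ n → b ≤ S k) :
    (1 - α) ^ n * x 0 + (1 - (1 - α) ^ n) * b ≤ x n := by
  have hneg : -x n ≤ (1 - α) ^ n * -x 0 + (1 - (1 - α) ^ n) * -b :=
    ema_le (S := fun k => -S k) (x := fun k => -x k) h0 h1 (fun k => by rw [hrec]; ring)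
      fun k hk hkn => neg_le_neg (hS k hk hkn)
  simpa only [mul_neg, ← neg_add, neg_le_neg_iff] using hneg

end ExponentialMovingAverage

theorem srtt_steady_state_bounds (α c r : ℚ) (h0 : 0 < α) (h1 : α < 1)
    (S x : ℕ → ℚ) (n : ℕ)
    (hrec : ∀ k : ℕ, x (k + 1) = (1 - α) * x k + α * S (k + 1))
    (hS : ∀ k : ℕ, 1 ≤ k → k ≤ n → c - r ≤ S k ∧ S k ≤ c + r) :
    (1 - α) ^ n * x 0 + (1 - (1 - α) ^ n) * (c - r) ≤ x n ∧
      x n ≤ (1 - α) ^ n * x 0 + (1 - (1 - α) ^ n) * (c + r) :=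
  ⟨le_ema h0.le h1.le hrec fun k hk hkn => (hS k hk hkn).1,
    ema_le h0.le h1.le hrec fun k hk hkn => (hS k hk hkn).2⟩
end
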